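/- arXiv:2501.08431 — 2 statements merged into one kernel-verified Lean document; each statement's English description precedes it below -/
import Mathlib

section
/- For all integers N ≥ 3 and k ≥ 1, every length-k face chain τ_1 ⊴ τ_2 ⊴ … ⊴ τ_k of ordered partitions of {0,…,N−1}, each with at least 2 parts, has excess at least E_k(N−1) = (1−k)(N−1) + 2k − 1; consequently e_k(𝕡^N) ≥ E_k(N−1). -/
/-- The weak-Bruhat comparison `τ ⊴ ρ` of ordered partitions of `{0,…,N−1}`
(encoded as functions to their part indices): for all `i < j`, either
`τ i < τ j` or `ρ i > ρ j`. -/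
def OrdPartRel {N p q : ℕ} (τ : Fin N → Fin p) (ρ : Fin N → Fin q) : Prop :=
  ∀ i j : Fin N, i < j → τ i < τ j ∨ ρ j < ρ i

/-- For `N ≥ 3`, `k ≥ 1`, every length-`k` face chain `τ_1 ⊴ … ⊴ τ_k` of
ordered partitions of `{0,…,N−1}`, each with at least `2` parts (i.e. each a
nontrivial face of the `(N−1)`-dimensional permutahedron `𝕡^N`), has excess
`(N−2) − Σ_i ((N − p_i) − 1)` at least `E_k(N−1) = (1−k)(N−1) + 2k − 1`;
consequently `e_k(𝕡^N) ≥ E_k(N−1)`. -/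
theorem excess_lower_bound (N k : ℕ) (hN : 3 ≤ N) (hk : 1 ≤ k)
    (p : Fin k → ℕ) (τ : ∀ i : Fin k, Fin N → Fin (p i))
    (hsurj : ∀ i, Function.Surjective (τ i))
    (hp : ∀ i, 2 ≤ p i)
    (hchain : ∀ i j : Fin k, (i : ℕ) + 1 = (j : ℕ) → OrdPartRel (τ i) (τ j)) :
    (1 - (k : ℤ)) * ((N : ℤ) - 1) + 2 * (k : ℤ) - 1
      ≤ ((N : ℤ) - 2) - ∑ i : Fin k, (((N : ℤ) - p i) - 1) := by
  have hsum : (2 : ℤ) * k ≤ ∑ i : Fin k, (p i : ℤ) := by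
    calc (2 : ℤ) * k = ∑ _i : Fin k, (2 : ℤ) := by
          simp [mul_comm]
      _ ≤ ∑ i : Fin k, (p i : ℤ) :=
          Finset.sum_le_sum fun i _ => by exact_mod_cast hp i
  have hrw : ∑ i : Fin k, (((N : ℤ) - p i) - 1)
      = (k : ℤ) * ((N : ℤ) - 1) - ∑ i : Fin k, (p i : ℤ) := by
    rw [Finset.sum_sub_distrib, Finset.sum_sub_distrib]
    simp [mul_comm]
    ring
  rw [hrw]
  linarith
end

section
/- The family of permutahedra has asymptotic k-length 1 for every k: for each integer k ≥ 1, the ratio e_k(𝕡^N) / E_k(N−1) tends to 1 as N → ∞ (limit in ℝ). -/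
/-- `e_k(𝕡^N)`: the minimum excess of a length-`k` face chain in the
permutahedron `𝕡^N`.  A face chain is a sequence `τ_1 ⊴ … ⊴ τ_k` of ordered
partitions of `{0,…,N−1}` (surjections `Fin N → Fin (p i)`), each with at
least `2` parts; its excess is `(N−2) − Σ_i ((N − p_i) − 1)`. -/
noncomputable def ekPerm (k N : ℕ) : ℤ :=
  sInf {e : ℤ | ∃ (p : Fin k → ℕ) (τ : ∀ i : Fin k, Fin N → Fin (p i)),
    (∀ i, Function.Surjective (τ i)) ∧ (∀ i, 2 ≤ p i) ∧
    (∀ i j : Fin k, (i : ℕ) + 1 = (j : ℕ) → OrdPartRel (τ i) (τ j)) ∧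
    e = ((N : ℤ) - 2) - ∑ i : Fin k, (((N : ℤ) - p i) - 1)}

namespace PermAsympAux

/-- The defining set of `ekPerm`. -/
def S (k N : ℕ) : Set ℤ :=
  {e : ℤ | ∃ (p : Fin k → ℕ) (τ : ∀ i : Fin k, Fin N → Fin (p i)),
    (∀ i, Function.Surjective (τ i)) ∧ (∀ i, 2 ≤ p i) ∧
    (∀ i j : Fin k, (i : ℕ) + 1 = (j : ℕ) → OrdPartRel (τ i) (τ j)) ∧
    e = ((N : ℤ) - 2) - ∑ i : Fin k, (((N : ℤ) - p i) - 1)}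

lemma ekPerm_eq (k N : ℕ) : ekPerm k N = sInf (S k N) := rfl

lemma mem_ge {k N : ℕ} {e : ℤ} (he : e ∈ S k N) :
    ((N : ℤ) - 2) - k * ((N : ℤ) - 3) ≤ e := by
  obtain ⟨p, τ, hsurj, hp2, hchain, rfl⟩ := he
  have hsum : ∑ i : Fin k, (((N : ℤ) - p i) - 1) ≤ ∑ _i : Fin k, ((N : ℤ) - 3) := by
    apply Finset.sum_le_sum
    intro i _
    have h2 : (2 : ℤ) ≤ (p i : ℤ) := by exact_mod_cast hp2 i
    linarith
  rw [Finset.sum_const, Finset.card_univ, Fintype.card_fin, nsmul_eq_mul] at hsum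
  linarith

lemma ek_le {k N : ℕ} {e : ℤ} (he : e ∈ S k N) : ekPerm k N ≤ e := by
  rw [ekPerm_eq]
  exact csInf_le ⟨((N : ℤ) - 2) - k * ((N : ℤ) - 3), fun x hx => mem_ge hx⟩ he

lemma le_ek {k N : ℕ} (hne : (S k N).Nonempty) :
    ((N : ℤ) - 2) - k * ((N : ℤ) - 3) ≤ ekPerm k N := by
  rw [ekPerm_eq]
  exact le_csInf hne fun e he => mem_ge he

/-! ### The construction: `τ_c j = j/s + c·(s−1−j%s)` -/

lemma tau_lt {N s : ℕ} (c : ℕ) {j : ℕ} (hj : j < N) :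
    j / s + c * (s - 1 - j % s) < (N - 1) / s + 1 + c * (s - 1) := by
  have h1 : j / s ≤ (N - 1) / s := Nat.div_le_div_right (by omega)
  have h2 : c * (s - 1 - j % s) ≤ c * (s - 1) := Nat.mul_le_mul_left _ (by omega)
  omega

lemma tau_surj {N s c : ℕ} (hs : 0 < s) (hN : 0 < N) (hcs : c * s ≤ N) :
    ∀ v, v < (N - 1) / s + 1 + c * (s - 1) → ∃ j, j < N ∧ j / s + c * (s - 1 - j % s) = v := by
  intro v hv
  rcases Nat.lt_or_ge v (c * (s - 1)) with hlt | hge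
  · -- v < c·(s−1) : take b = v % c, r̄ = v / c
    have hc : 0 < c := by
      rcases Nat.eq_zero_or_pos c with rfl | h
      · simp at hlt
      · exact h
    obtain ⟨q, b, hbc, hrb, hveq⟩ : ∃ q b, b < c ∧ q < s - 1 ∧ b + c * q = v := by
      refine ⟨v / c, v % c, Nat.mod_lt _ hc, ?_, Nat.mod_add_div v c⟩
      rw [Nat.div_lt_iff_lt_mul hc, Nat.mul_comm]
      exact hlt
    refine ⟨s * b + (s - 1 - q), ?_, ?_⟩
    · have h1 : s * b + (s - 1 - q) < s * (b + 1) := by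
        have h0 : s - 1 - q < s := by omega
        calc s * b + (s - 1 - q) < s * b + s := by omega
          _ = s * (b + 1) := by ring
      have h2 : s * (b + 1) ≤ s * c := Nat.mul_le_mul_left _ (by omega)
      have h3 : s * c = c * s := Nat.mul_comm _ _
      omega
    · have hrs : s - 1 - q < s := by omega
      have hdiv : (s * b + (s - 1 - q)) / s = b := by
        rw [Nat.mul_add_div hs, Nat.div_eq_of_lt hrs, Nat.add_zero]
      have hmod : (s * b + (s - 1 - q)) % s = s - 1 - q := by
        rw [Nat.mul_add_mod, Nat.mod_eq_of_lt hrs]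
      rw [hdiv, hmod]
      have h4 : s - 1 - (s - 1 - q) = q := by omega
      rw [h4]
      omega
  · -- v ≥ c·(s−1) : take b = v − c·(s−1), r = 0
    set b := v - c * (s - 1) with hb
    have hbB : b ≤ (N - 1) / s := by omega
    refine ⟨b * s, ?_, ?_⟩
    · have h1 : b * s ≤ ((N - 1) / s) * s := Nat.mul_le_mul_right _ hbB
      have h2 : ((N - 1) / s) * s ≤ N - 1 := Nat.div_mul_le_self _ _
      omega
    · have hdiv : b * s / s = b := Nat.mul_div_cancel b hs
      have hmod : b * s % s = 0 := Nat.mul_mod_left b s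
      rw [hdiv, hmod, Nat.sub_zero]
      omega

lemma tau_chain {s : ℕ} (hs : 0 < s) (c : ℕ) {i j : ℕ} (hij : i < j) :
    i / s + c * (s - 1 - i % s) < j / s + c * (s - 1 - j % s) ∨
    j / s + (c + 1) * (s - 1 - j % s) < i / s + (c + 1) * (s - 1 - i % s) := by
  by_cases h : i / s + c * (s - 1 - i % s) < j / s + c * (s - 1 - j % s)
  · exact Or.inl h
  right
  push_neg at h
  have hb : i / s ≤ j / s := Nat.div_le_div_right (le_of_lt hij)
  have his : i % s < s := Nat.mod_lt _ hs
  have hjs : j % s < s := Nat.mod_lt _ hs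
  have hkey : s - 1 - j % s < s - 1 - i % s := by
    rcases eq_or_lt_of_le hb with hbe | hbl
    · -- same block
      have h1 := Nat.div_add_mod i s
      have h2 := Nat.div_add_mod j s
      rw [hbe] at h1
      have : i % s < j % s := by omega
      omega
    · -- different block : from h, c·r̄ⱼ < c·r̄ᵢ
      have hcc : c * (s - 1 - j % s) < c * (s - 1 - i % s) := by omega
      exact Nat.lt_of_mul_lt_mul_left hcc
  have e1 : (c + 1) * (s - 1 - j % s) = c * (s - 1 - j % s) + (s - 1 - j % s) := by ring
  have e2 : (c + 1) * (s - 1 - i % s) = c * (s - 1 - i % s) + (s - 1 - i % s) := by ring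
  omega

/-- The witness chain gives an element of `S k N` bounded by
`((N−2) − k(N−3)) + k·(B + k(s−1))` where `B = (N−1)/s + 1`. -/
lemma witness {k N s : ℕ} (hk : 1 ≤ k) (hs : 1 ≤ s) (hsN : s + 1 ≤ N)
    (hks : k * s ≤ N) :
    ∃ e ∈ S k N,
      e ≤ (((N : ℤ) - 2) - k * ((N : ℤ) - 3)) +
        k * (((N - 1) / s + 1 + k * (s - 1) : ℕ) : ℤ) := by
  have hN : 0 < N := by omega
  set B := (N - 1) / s + 1 with hB
  set p : Fin k → ℕ := fun i => B + (i : ℕ) * (s - 1) with hp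
  set τ : ∀ i : Fin k, Fin N → Fin (p i) := fun i j =>
    ⟨(j : ℕ) / s + (i : ℕ) * (s - 1 - (j : ℕ) % s), tau_lt _ j.2⟩ with hτ
  have hsurj : ∀ i, Function.Surjective (τ i) := by
    intro i v
    have hcs : (i : ℕ) * s ≤ N := by
      have : (i : ℕ) + 1 ≤ k := i.2
      calc (i : ℕ) * s ≤ k * s := Nat.mul_le_mul_right _ (by omega)
        _ ≤ N := hks
    obtain ⟨j, hjN, hjv⟩ := tau_surj hs hN hcs (v : ℕ) v.2
    exact ⟨⟨j, hjN⟩, Fin.ext hjv⟩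
  have hp2 : ∀ i, 2 ≤ p i := by
    intro i
    have h1 : 1 ≤ (N - 1) / s := (Nat.one_le_div_iff hs).mpr (by omega)
    simp only [hp]
    omega
  have hchain : ∀ i j : Fin k, (i : ℕ) + 1 = (j : ℕ) → OrdPartRel (τ i) (τ j) := by
    intro i j hij a b hab
    have hab' : (a : ℕ) < (b : ℕ) := hab
    have := tau_chain hs (i : ℕ) hab'
    rcases this with h | h
    · left
      exact h
    · right
      show ((τ j b : ℕ)) < ((τ j a : ℕ))
      simp only [hτ, ← hij]
      exact h
  refine ⟨_, ⟨p, τ, hsurj, hp2, hchain, rfl⟩, ?_⟩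
  set P : ℕ := (N - 1) / s + 1 + k * (s - 1) with hP
  have hterm : ∀ i : Fin k, ((N : ℤ) - (P : ℤ)) - 1 ≤ ((N : ℤ) - (p i : ℤ)) - 1 := by
    intro i
    have h1 : p i ≤ P := by
      have h2 : (i : ℕ) * (s - 1) ≤ k * (s - 1) :=
        Nat.mul_le_mul_right _ (le_of_lt i.2)
      simp only [hp, hP, hB]
      omega
    have : (p i : ℤ) ≤ (P : ℤ) := by exact_mod_cast h1
    linarith
  have hsum : ∑ _i : Fin k, (((N : ℤ) - (P : ℤ)) - 1) ≤
      ∑ i : Fin k, (((N : ℤ) - (p i : ℤ)) - 1) :=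
    Finset.sum_le_sum fun i _ => hterm i
  rw [Finset.sum_const, Finset.card_univ, Fintype.card_fin, nsmul_eq_mul] at hsum
  have hPle : (P : ℤ) ≥ 0 := by positivity
  have hk' : (1 : ℤ) ≤ (k : ℤ) := by exact_mod_cast hk
  nlinarith [hsum]

end PermAsympAux

open PermAsympAux Filter in
/-- The family of permutahedra has asymptotic `k`-length `1` for every `k`:
for each `k ≥ 1`, the ratio `e_k(𝕡^N) / E_k(N−1)` tends to `1` as `N → ∞`,
where `E_k(d) = (1−k)d + 2k − 1`. -/
theorem permutahedra_asymptotic_k_length_one (k : ℕ) (hk : 1 ≤ k) :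
    Filter.Tendsto
      (fun N : ℕ => (ekPerm k N : ℝ) /
        ((1 - (k : ℝ)) * ((N : ℝ) - 1) + 2 * (k : ℝ) - 1))
      Filter.atTop (nhds 1) := by
  rcases (by omega : k = 1 ∨ 2 ≤ k) with rfl | hk2
  · -- k = 1 : the ratio is eventually the constant 1
    apply Filter.Tendsto.congr' _ tendsto_const_nhds
    filter_upwards [Filter.eventually_ge_atTop 2] with N hN
    have hmem : (1 : ℤ) ∈ S 1 N := by
      refine ⟨fun _ => 2, fun _ j => if (j : ℕ) = 0 then 0 else 1, ?_, ?_, ?_, ?_⟩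
      · intro i v
        fin_cases v
        · exact ⟨⟨0, by omega⟩, by simp⟩
        · refine ⟨⟨1, by omega⟩, by simp⟩
      · intro i; norm_num
      · intro i j hij
        have : (i : ℕ) = 0 := by omega
        have : (j : ℕ) = 0 := by omega
        omega
      · rw [Fin.sum_univ_one]
        push_cast
        ring
    have h1 : ekPerm 1 N = 1 := by
      have hle := ek_le hmem
      have hge := le_ek ⟨1, hmem⟩
      have : ((N : ℤ) - 2) - 1 * ((N : ℤ) - 3) = 1 := by ring
      omega
    rw [h1]
    norm_num
  · -- k ≥ 2
    have hsq : Tendsto (fun N : ℕ => Nat.sqrt N) atTop atTop := by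
      apply Filter.tendsto_atTop_atTop.mpr
      intro m
      exact ⟨m * m, fun n hn => Nat.le_sqrt.mpr hn⟩
    have hb : Tendsto (fun N : ℕ => (8 * ((k : ℝ) * ((k : ℝ) + 1))) / (Nat.sqrt N : ℝ))
        atTop (nhds 0) :=
      Filter.Tendsto.div_atTop tendsto_const_nhds
        (tendsto_natCast_atTop_atTop.comp hsq)
    have key : ∀ᶠ N in atTop,
        ‖(fun N : ℕ => (ekPerm k N : ℝ) /
            ((1 - (k : ℝ)) * ((N : ℝ) - 1) + 2 * (k : ℝ) - 1) - 1) N‖ ≤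
          (8 * ((k : ℝ) * ((k : ℝ) + 1))) / (Nat.sqrt N : ℝ) := by
      filter_upwards [Filter.eventually_ge_atTop ((k + 3) * (k + 3))] with N hN
      set t := Nat.sqrt N with ht
      have htk : k + 3 ≤ t := Nat.le_sqrt.mpr hN
      have htt : t * t ≤ N := Nat.sqrt_le N
      have hNt : N < (t + 1) * (t + 1) := Nat.lt_succ_sqrt N
      -- witness with s = t + 1
      obtain ⟨e, hemem, hebound⟩ := witness (k := k) (N := N) (s := t + 1)
        hk (by omega) (by nlinarith) (by nlinarith)
      simp only [Nat.add_sub_cancel] at hebound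
      have hup : ekPerm k N ≤ e := ek_le hemem
      have hlow : ((N : ℤ) - 2) - k * ((N : ℤ) - 3) ≤ ekPerm k N := le_ek ⟨e, hemem⟩
      -- bound P = (N−1)/(t+1) + 1 + k·t in ℕ
      have hdivt : (N - 1) / (t + 1) ≤ t := by
        have : (N - 1) / (t + 1) < t + 1 := by
          rw [Nat.div_lt_iff_lt_mul (by omega)]
          omega
        omega
      have hPb : (N - 1) / (t + 1) + 1 + k * t ≤ (k + 1) * (t + 1) := by
        have e1 : (k + 1) * (t + 1) = k * t + k + t + 1 := by ring
        rw [e1]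
        omega
      -- combined integer bound
      have hPbZ : (((N - 1) / (t + 1) + 1 + k * t : ℕ) : ℤ) ≤
          ((k : ℤ) + 1) * ((t : ℤ) + 1) := by exact_mod_cast hPb
      have hupZ : ekPerm k N ≤ (((N : ℤ) - 2) - k * ((N : ℤ) - 3)) +
          (k : ℤ) * (((k : ℤ) + 1) * ((t : ℤ) + 1)) := by
        have hk0 : (0 : ℤ) ≤ (k : ℤ) := Int.natCast_nonneg k
        have := mul_le_mul_of_nonneg_left hPbZ hk0
        omega
      -- pass to ℝ
      have hkR : (2 : ℝ) ≤ (k : ℝ) := by exact_mod_cast hk2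
      have htR : ((k : ℝ) + 3) ≤ (t : ℝ) := by exact_mod_cast htk
      have httR : (t : ℝ) * (t : ℝ) ≤ (N : ℝ) := by exact_mod_cast htt
      have hlowR : ((N : ℝ) - 2) - (k : ℝ) * ((N : ℝ) - 3) ≤ (ekPerm k N : ℝ) := by
        exact_mod_cast hlow
      have hupR : (ekPerm k N : ℝ) ≤ (((N : ℝ) - 2) - (k : ℝ) * ((N : ℝ) - 3)) +
          (k : ℝ) * (((k : ℝ) + 1) * ((t : ℝ) + 1)) := by
        exact_mod_cast hupZ
      set x : ℝ := (ekPerm k N : ℝ) with hx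
      set E : ℝ := ((N : ℝ) - 2) - (k : ℝ) * ((N : ℝ) - 3) with hE
      -- the denominator equals E
      have hdenom : (1 - (k : ℝ)) * ((N : ℝ) - 1) + 2 * (k : ℝ) - 1 = E := by
        rw [hE]; ring
      have hEneg : E < 0 := by
        rw [hE]; nlinarith
      have hhalf : (N : ℝ) ≤ 2 * (-E) := by
        rw [hE]; nlinarith
      have htpos : (0 : ℝ) < (t : ℝ) := by linarith
      simp only [hdenom]
      rw [Real.norm_eq_abs]
      have hEne : E ≠ 0 := ne_of_lt hEneg
      have habs : x / E - 1 = (x - E) / E := by field_simp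
      rw [habs, abs_div, abs_of_neg hEneg, abs_of_nonneg (by linarith : (0:ℝ) ≤ x - E)]
      rw [div_le_div_iff₀ (by linarith) htpos]
      -- (x−E)·t ≤ 8k(k+1)·(−E)
      clear hemem hup hlow hupZ hPbZ hebound hb hsq hdivt hPb hNt hN
      have hC : (0 : ℝ) ≤ (k : ℝ) * ((k : ℝ) + 1) := by positivity
      have h6 : x - E ≤ ((k : ℝ) * ((k : ℝ) + 1)) * ((t : ℝ) + 1) := by
        linarith [hupR]
      have h8 : x - E ≤ 2 * ((k : ℝ) * ((k : ℝ) + 1)) * (t : ℝ) := by nlinarith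
      have h9 : (x - E) * (t : ℝ) ≤ (2 * ((k : ℝ) * ((k : ℝ) + 1)) * (t : ℝ)) * (t : ℝ) :=
        mul_le_mul_of_nonneg_right h8 htpos.le
      have h11 : 2 * ((k : ℝ) * ((k : ℝ) + 1)) * ((t : ℝ) * (t : ℝ)) ≤
          2 * ((k : ℝ) * ((k : ℝ) + 1)) * (N : ℝ) :=
        mul_le_mul_of_nonneg_left httR (by positivity)
      have h12 : 2 * ((k : ℝ) * ((k : ℝ) + 1)) * (N : ℝ) ≤
          2 * ((k : ℝ) * ((k : ℝ) + 1)) * (2 * (-E)) :=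
        mul_le_mul_of_nonneg_left hhalf (by positivity)
      have h13 : (0 : ℝ) ≤ ((k : ℝ) * ((k : ℝ) + 1)) * (-E) :=
        mul_nonneg hC (by linarith)
      nlinarith [h9, h11, h12, h13]
    have h0 : Tendsto (fun N : ℕ => (ekPerm k N : ℝ) /
        ((1 - (k : ℝ)) * ((N : ℝ) - 1) + 2 * (k : ℝ) - 1) - 1) atTop (nhds 0) :=
      squeeze_zero_norm' key hb
    have h2 := h0.add_const 1
    rw [zero_add] at h2
    exact h2.congr fun N => by ring
end
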